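/- arXiv:1901.06912 — 5 statements merged into one kernel-verified Lean document; each statement's English description precedes it below -/
import Mathlib

section
/- Let β ∈ [0, 2) and define the Bell operator I_β = β A₁⊗I + A₁⊗(B₁+B₂) + A₂⊗(B₁−B₂) on ℂ²⊗ℂ² with A₁ = Z, A₂ = X, B₁+B₂ = 2cos(μ/2) Z, B₁−B₂ = 2sin(μ/2) X, where cos(μ/2) = sqrt((1+β²/4)/2). Then the operator norm of I_β equals 2√2·√(1+β²/4). -/
open Matrix Kronecker

noncomputable def PauliX : Matrix (Fin 2) (Fin 2) ℂ := !![0, 1; 1, 0]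
noncomputable def PauliZ : Matrix (Fin 2) (Fin 2) ℂ := !![1, 0; 0, -1]

/-- The Bell operator `I_β` with the optimal measurements, acting on ℂ²⊗ℂ². -/
noncomputable def bellOpI (β : ℝ) : Matrix (Fin 2 × Fin 2) (Fin 2 × Fin 2) ℂ :=
  (β : ℂ) • (PauliZ ⊗ₖ (1 : Matrix (Fin 2) (Fin 2) ℂ))
    + ((2 * Real.sqrt ((1 + β ^ 2 / 4) / 2) : ℝ) : ℂ) • (PauliZ ⊗ₖ PauliZ)
    + ((2 * Real.sqrt (1 - (1 + β ^ 2 / 4) / 2) : ℝ) : ℂ) • (PauliX ⊗ₖ PauliX)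

set_option maxHeartbeats 1000000 in
/-- Auxiliary cube identity, with opaque coefficients. -/
lemma bellOpI_cube_aux (b c s : ℂ) (hc : c ^ 2 = 2 + b ^ 2 / 2) (hs : s ^ 2 = 2 - b ^ 2 / 2) :
    (b • (PauliZ ⊗ₖ (1 : Matrix (Fin 2) (Fin 2) ℂ)) + c • (PauliZ ⊗ₖ PauliZ)
        + s • (PauliX ⊗ₖ PauliX))
      * (b • (PauliZ ⊗ₖ (1 : Matrix (Fin 2) (Fin 2) ℂ)) + c • (PauliZ ⊗ₖ PauliZ)
        + s • (PauliX ⊗ₖ PauliX))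
      * (b • (PauliZ ⊗ₖ (1 : Matrix (Fin 2) (Fin 2) ℂ)) + c • (PauliZ ⊗ₖ PauliZ)
        + s • (PauliX ⊗ₖ PauliX))
    = (4 * c ^ 2) • (b • (PauliZ ⊗ₖ (1 : Matrix (Fin 2) (Fin 2) ℂ)) + c • (PauliZ ⊗ₖ PauliZ)
        + s • (PauliX ⊗ₖ PauliX)) := by
  ext ⟨i, j⟩ ⟨k, l⟩
  fin_cases i <;> fin_cases j <;> fin_cases k <;> fin_cases l <;>
    simp [Matrix.mul_apply, Fintype.sum_prod_type, Fin.sum_univ_two, PauliX, PauliZ,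
      Matrix.one_apply] <;>
    first
      | linear_combination (-(b + 3 * c)) * hc + (b + 3 * c) * hs
      | linear_combination (b + 3 * c) * hc + (-(b + 3 * c)) * hs
      | linear_combination (-(b - 3 * c)) * hc + (b - 3 * c) * hs
      | linear_combination (b - 3 * c) * hc + (-(b - 3 * c)) * hs
      | linear_combination (-s) * hc + s * hs

/-- The top-left entry, with opaque coefficients. -/
lemma bellOpI_entry_aux (b c s : ℂ) :
    (b • (PauliZ ⊗ₖ (1 : Matrix (Fin 2) (Fin 2) ℂ)) + c • (PauliZ ⊗ₖ PauliZ)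
        + s • (PauliX ⊗ₖ PauliX)) (0, 0) (0, 0) = b + c := by
  simp [PauliX, PauliZ, Matrix.one_apply]

set_option maxHeartbeats 1000000 in
/-- The Bell operator is Hermitian (with opaque real coefficients). -/
lemma bellOpI_sa_aux (b c s : ℝ) :
    _root_.IsSelfAdjoint ((b : ℂ) • (PauliZ ⊗ₖ (1 : Matrix (Fin 2) (Fin 2) ℂ))
      + (c : ℂ) • (PauliZ ⊗ₖ PauliZ) + (s : ℂ) • (PauliX ⊗ₖ PauliX)) := by
  show star _ = _
  rw [Matrix.star_eq_conjTranspose]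
  ext ⟨i, j⟩ ⟨k, l⟩
  fin_cases i <;> fin_cases j <;> fin_cases k <;> fin_cases l <;>
    simp [Matrix.conjTranspose_apply, PauliX, PauliZ, Matrix.one_apply]

/-- Norm of a self-adjoint element whose cube is `r² • a`. -/
lemma norm_of_selfAdjoint_cube {A : Type*} [NormedRing A] [StarRing A] [CStarRing A]
    [NormedSpace ℝ A] [IsScalarTower ℝ A A] [SMulCommClass ℝ A A]
    (a : A) (ha : _root_.IsSelfAdjoint a) (r : ℝ) (hr : 0 < r)
    (h3 : a * a * a = (r ^ 2) • a) (h0 : a ≠ 0) : ‖a‖ = r := by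
  have hsq : ‖a * a‖ = ‖a‖ * ‖a‖ := by
    have := CStarRing.norm_star_mul_self (x := a)
    rwa [ha.star_eq] at this
  have haa : _root_.IsSelfAdjoint (a * a) := by
    have : star (a * a) = a * a := by rw [StarMul.star_mul, ha.star_eq]
    exact this
  have hsq2 : ‖(a * a) * (a * a)‖ = ‖a * a‖ * ‖a * a‖ := by
    have := CStarRing.norm_star_mul_self (x := a * a)
    rwa [haa.star_eq] at this
  have h4 : (a * a) * (a * a) = (r ^ 2) • (a * a) := by
    calc (a * a) * (a * a) = (a * a * a) * a := by rw [← mul_assoc]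
    _ = (r ^ 2) • a * a := by rw [h3]
    _ = (r ^ 2) • (a * a) := by rw [smul_mul_assoc]
  have hn4 : ‖a‖ * ‖a‖ * (‖a‖ * ‖a‖) = r ^ 2 * (‖a‖ * ‖a‖) := by
    rw [← hsq, ← hsq2, h4, norm_smul, Real.norm_eq_abs, abs_of_nonneg (sq_nonneg r), hsq]
  have hna : 0 < ‖a‖ := norm_pos_iff.mpr h0
  have hNN : ‖a‖ * ‖a‖ = r ^ 2 :=
    mul_right_cancel₀ (ne_of_gt (mul_pos hna hna)) hn4
  nlinarith [hNN, hna, hr, sq_nonneg (‖a‖ - r), sq_nonneg (‖a‖ + r)]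

set_option maxHeartbeats 1000000 in
set_option synthInstance.maxHeartbeats 400000 in
/-- The operator norm of the Bell operator `I_β` equals `2√2·√(1+β²/4)`. -/
theorem bellOpI_opNorm (β : ℝ) (hβ0 : 0 ≤ β) (hβ2 : β < 2) :
    ‖Matrix.toEuclideanCLM (𝕜 := ℂ) (bellOpI β)‖
      = 2 * Real.sqrt 2 * Real.sqrt (1 + β ^ 2 / 4) := by
  have hβ4 : β ^ 2 ≤ 4 := by nlinarith
  have hq0 : (0:ℝ) ≤ (1 + β ^ 2 / 4) / 2 := by positivity
  have hs0 : (0:ℝ) ≤ 1 - (1 + β ^ 2 / 4) / 2 := by nlinarith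
  set cR : ℝ := 2 * Real.sqrt ((1 + β ^ 2 / 4) / 2) with hcR
  set sR : ℝ := 2 * Real.sqrt (1 - (1 + β ^ 2 / 4) / 2) with hsR
  have hc2 : cR ^ 2 = 2 + β ^ 2 / 2 := by
    rw [hcR, mul_pow, Real.sq_sqrt hq0]; ring
  have hs2 : sR ^ 2 = 2 - β ^ 2 / 2 := by
    rw [hsR, mul_pow, Real.sq_sqrt hs0]; ring
  have hcpos : 0 < cR := by rw [hcR]; positivity
  have hc2' : (cR : ℂ) ^ 2 = 2 + (β : ℂ) ^ 2 / 2 := by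
    have := congrArg (Complex.ofReal) hc2
    exact_mod_cast hc2
  have hs2' : (sR : ℂ) ^ 2 = 2 - (β : ℂ) ^ 2 / 2 := by
    have := congrArg (Complex.ofReal) hs2
    exact_mod_cast hs2
  have hMdef : bellOpI β = (β : ℂ) • (PauliZ ⊗ₖ (1 : Matrix (Fin 2) (Fin 2) ℂ))
      + (cR : ℂ) • (PauliZ ⊗ₖ PauliZ) + (sR : ℂ) • (PauliX ⊗ₖ PauliX) := rfl
  have hM3 : bellOpI β * bellOpI β * bellOpI β = (((2 * cR) ^ 2 : ℝ) : ℂ) • bellOpI β := by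
    rw [hMdef, bellOpI_cube_aux (β : ℂ) (cR : ℂ) (sR : ℂ) hc2' hs2']
    push_cast
    ring_nf
  set a := Matrix.toEuclideanCLM (𝕜 := ℂ) (bellOpI β) with haDef
  have ha3 : a * a * a = (((2 * cR) ^ 2 : ℝ)) • a := by
    have := congrArg (Matrix.toEuclideanCLM (𝕜 := ℂ)) hM3
    rw [_root_.map_mul, _root_.map_mul, _root_.map_smul] at this
    rw [haDef, this]
    exact Complex.coe_smul ((2 * cR) ^ 2) (Matrix.toEuclideanCLM (𝕜 := ℂ) (bellOpI β))
  have hsa : _root_.IsSelfAdjoint a := by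
    rw [haDef, hMdef]
    exact (bellOpI_sa_aux β cR sR).map (Matrix.toEuclideanCLM (𝕜 := ℂ))
  have h0 : a ≠ 0 := by
    intro h
    have hZ : bellOpI β = 0 := by
      apply (Matrix.toEuclideanCLM (𝕜 := ℂ)).injective
      simpa [haDef] using h
    have h00 : (bellOpI β) (0, 0) (0, 0) = 0 := by rw [hZ]; rfl
    rw [hMdef, bellOpI_entry_aux] at h00
    have : β + cR = 0 := by exact_mod_cast h00
    linarith
  have hnorm : ‖a‖ = 2 * cR :=
    norm_of_selfAdjoint_cube a hsa (2 * cR) (by linarith) ha3 h0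
  rw [hnorm, hcR, Real.sqrt_div (by positivity : (0:ℝ) ≤ 1 + β ^ 2 / 4)]
  have h2 : Real.sqrt 2 * Real.sqrt 2 = 2 := Real.mul_self_sqrt (by norm_num)
  have h2ne : Real.sqrt 2 ≠ 0 := by positivity
  have key : Real.sqrt (1 + β ^ 2 / 4) / Real.sqrt 2 * Real.sqrt 2
      = Real.sqrt (1 + β ^ 2 / 4) := div_mul_cancel₀ _ h2ne
  linear_combination (2 * Real.sqrt 2) * key
    - (2 * (Real.sqrt (1 + β ^ 2 / 4) / Real.sqrt 2)) * h2
end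

section
/- Let A₁ = Z ⊗ I and A₃ be a Hermitian operator on ℂ² ⊗ H' (H' a finite-dimensional Hilbert space) with A₃² = I and {A₁, A₃} = 0 (anticommutation). Then A₃ = X ⊗ A'_X + Y ⊗ A'_Y for Hermitian operators A'_X, A'_Y on H' satisfying A'_X² + A'_Y² = I and [A'_X, A'_Y] = 0. -/
open Matrix Kronecker

noncomputable def PauliY : Matrix (Fin 2) (Fin 2) ℂ := !![0, -Complex.I; Complex.I, 0]
lemma pauliXX : PauliX * PauliX = 1 := by
  ext i j; fin_cases i <;> fin_cases j <;>
    simp [PauliX, Matrix.mul_apply, Fin.sum_univ_two, Matrix.one_apply]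

lemma pauliYY : PauliY * PauliY = 1 := by
  ext i j; fin_cases i <;> fin_cases j <;>
    simp [PauliY, Matrix.mul_apply, Fin.sum_univ_two, Matrix.one_apply]

lemma pauliXY : PauliX * PauliY = Complex.I • PauliZ := by
  ext i j; fin_cases i <;> fin_cases j <;>
    simp [PauliX, PauliY, PauliZ, Matrix.mul_apply, Fin.sum_univ_two]

lemma pauliYX : PauliY * PauliX = (-Complex.I) • PauliZ := by
  ext i j; fin_cases i <;> fin_cases j <;>
    simp [PauliX, PauliY, PauliZ, Matrix.mul_apply, Fin.sum_univ_two]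

/-- A ±1-valued observable anticommuting with `Z ⊗ I` has the form
`X ⊗ A'_X + Y ⊗ A'_Y` with `A'_X² + A'_Y² = I` and `[A'_X, A'_Y] = 0`. -/
theorem anticommuting_observable_form (n : ℕ)
    (A₃ : Matrix (Fin 2 × Fin n) (Fin 2 × Fin n) ℂ)
    (hherm : A₃.IsHermitian) (hsq : A₃ * A₃ = 1)
    (hanti : (PauliZ ⊗ₖ (1 : Matrix (Fin n) (Fin n) ℂ)) * A₃
        + A₃ * (PauliZ ⊗ₖ (1 : Matrix (Fin n) (Fin n) ℂ)) = 0) :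
    ∃ AX AY : Matrix (Fin n) (Fin n) ℂ,
      AX.IsHermitian ∧ AY.IsHermitian ∧
      A₃ = PauliX ⊗ₖ AX + PauliY ⊗ₖ AY ∧
      AX * AX + AY * AY = 1 ∧ AX * AY = AY * AX := by
  -- entrywise form of hermiticity
  have hH : ∀ p q, (starRingEnd ℂ) (A₃ q p) = A₃ p q := by
    intro p q
    have := congrFun (congrFun hherm.eq p) q
    simpa [Matrix.conjTranspose_apply] using this
  -- the diagonal blocks vanish
  have hL0 : ∀ (k : Fin n) q,
      ((PauliZ ⊗ₖ (1 : Matrix (Fin n) (Fin n) ℂ)) * A₃) (0, k) q = A₃ (0, k) q := by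
    intro k q
    rw [Matrix.mul_apply, Fintype.sum_prod_type]
    simp [Matrix.kroneckerMap_apply, Matrix.one_apply, PauliZ, Fin.sum_univ_two]
  have hL1 : ∀ (k : Fin n) q,
      ((PauliZ ⊗ₖ (1 : Matrix (Fin n) (Fin n) ℂ)) * A₃) (1, k) q = -A₃ (1, k) q := by
    intro k q
    rw [Matrix.mul_apply, Fintype.sum_prod_type]
    simp [Matrix.kroneckerMap_apply, Matrix.one_apply, PauliZ, Fin.sum_univ_two]
  have hR0 : ∀ q (l : Fin n),
      (A₃ * (PauliZ ⊗ₖ (1 : Matrix (Fin n) (Fin n) ℂ))) q (0, l) = A₃ q (0, l) := by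
    intro q l
    rw [Matrix.mul_apply, Fintype.sum_prod_type]
    simp [Matrix.kroneckerMap_apply, Matrix.one_apply, PauliZ, Fin.sum_univ_two]
  have hR1 : ∀ q (l : Fin n),
      (A₃ * (PauliZ ⊗ₖ (1 : Matrix (Fin n) (Fin n) ℂ))) q (1, l) = -A₃ q (1, l) := by
    intro q l
    rw [Matrix.mul_apply, Fintype.sum_prod_type]
    simp [Matrix.kroneckerMap_apply, Matrix.one_apply, PauliZ, Fin.sum_univ_two]
  have h00 : ∀ k l : Fin n, A₃ (0, k) (0, l) = 0 := by
    intro k l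
    have := congrFun (congrFun hanti (0, k)) (0, l)
    rw [Matrix.add_apply, hL0, hR0, Matrix.zero_apply] at this
    linear_combination this / 2
  have h11 : ∀ k l : Fin n, A₃ (1, k) (1, l) = 0 := by
    intro k l
    have := congrFun (congrFun hanti (1, k)) (1, l)
    rw [Matrix.add_apply, hL1, hR1, Matrix.zero_apply] at this
    linear_combination -this / 2
  -- define the two blocks
  set AX : Matrix (Fin n) (Fin n) ℂ :=
    fun k l => (A₃ (0, k) (1, l) + A₃ (1, k) (0, l)) / 2 with hAX
  set AY : Matrix (Fin n) (Fin n) ℂ :=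
    fun k l => Complex.I * (A₃ (0, k) (1, l) - A₃ (1, k) (0, l)) / 2 with hAY
  have hXherm : AX.IsHermitian := by
    ext k l
    rw [Matrix.conjTranspose_apply]
    simp only [Matrix.conjTranspose_apply, hAX, star_div₀, star_add]
    rw [show (star (A₃ (0, l) (1, k)) : ℂ) = (starRingEnd ℂ) (A₃ (0, l) (1, k)) from rfl]
    rw [show (star (A₃ (1, l) (0, k)) : ℂ) = (starRingEnd ℂ) (A₃ (1, l) (0, k)) from rfl]
    rw [hH, hH]
    norm_num [star_ofNat]
    ring
  have hYherm : AY.IsHermitian := by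
    ext k l
    rw [Matrix.conjTranspose_apply]
    simp only [Matrix.conjTranspose_apply, hAY, star_div₀, star_mul', star_sub]
    rw [show (star (A₃ (0, l) (1, k)) : ℂ) = (starRingEnd ℂ) (A₃ (0, l) (1, k)) from rfl]
    rw [show (star (A₃ (1, l) (0, k)) : ℂ) = (starRingEnd ℂ) (A₃ (1, l) (0, k)) from rfl]
    rw [hH, hH]
    simp [Complex.star_def, Complex.conj_I]
    ring
  have hform : A₃ = PauliX ⊗ₖ AX + PauliY ⊗ₖ AY := by
    ext ⟨i, k⟩ ⟨j, l⟩
    rw [Matrix.add_apply, Matrix.kroneckerMap_apply, Matrix.kroneckerMap_apply]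
    fin_cases i <;> fin_cases j <;>
      simp [Matrix.add_apply, Matrix.kroneckerMap_apply, PauliX, PauliY, hAX, hAY,
        h00, h11] <;> ring_nf <;> simp [Complex.I_sq] <;> ring
  -- now use hsq
  have hsq' : (1 : Matrix (Fin 2) (Fin 2) ℂ) ⊗ₖ (AX * AX + AY * AY)
      + PauliZ ⊗ₖ (Complex.I • (AX * AY) + (-Complex.I) • (AY * AX))
      = (1 : Matrix (Fin 2 × Fin n) (Fin 2 × Fin n) ℂ) := by
    rw [← hsq, hform]
    rw [add_mul, mul_add, mul_add, ← Matrix.mul_kronecker_mul, ← Matrix.mul_kronecker_mul,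
      ← Matrix.mul_kronecker_mul, ← Matrix.mul_kronecker_mul,
      pauliXX, pauliYY, pauliXY, pauliYX]
    rw [Matrix.kronecker_add, Matrix.kronecker_add]
    simp only [Matrix.smul_kronecker, Matrix.kronecker_smul]
    abel
  have key : ∀ k l : Fin n,
      (AX * AX + AY * AY) k l
        + PauliZ 0 0 * (Complex.I • (AX * AY) + (-Complex.I) • (AY * AX)) k l
        = (1 : Matrix (Fin n) (Fin n) ℂ) k l ∧
      (AX * AX + AY * AY) k l
        + PauliZ 1 1 * (Complex.I • (AX * AY) + (-Complex.I) • (AY * AX)) k l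
        = (1 : Matrix (Fin n) (Fin n) ℂ) k l := by
    intro k l
    constructor
    · have := congrFun (congrFun hsq' (0, k)) (0, l)
      simpa [Matrix.add_apply, Matrix.kroneckerMap_apply, Matrix.one_apply] using this
    · have := congrFun (congrFun hsq' (1, k)) (1, l)
      simpa [Matrix.add_apply, Matrix.kroneckerMap_apply, Matrix.one_apply] using this
  have hZ00 : PauliZ 0 0 = 1 := by simp [PauliZ]
  have hZ11 : PauliZ 1 1 = -1 := by simp [PauliZ]
  refine ⟨AX, AY, hXherm, hYherm, hform, ?_, ?_⟩
  · ext k l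
    obtain ⟨e0, e1⟩ := key k l
    rw [hZ00] at e0; rw [hZ11] at e1
    simp only [Matrix.add_apply, Matrix.smul_apply, smul_eq_mul] at e0 e1 ⊢
    linear_combination (e0 + e1) / 2
  · ext k l
    obtain ⟨e0, e1⟩ := key k l
    rw [hZ00] at e0; rw [hZ11] at e1
    simp only [Matrix.add_apply, Matrix.smul_apply, smul_eq_mul] at e0 e1
    have h2 : Complex.I * ((AX * AY) k l - (AY * AX) k l) = 0 := by
      linear_combination (e0 - e1) / 2
    have := mul_eq_zero.mp h2
    rcases this with h | h
    · exact absurd h Complex.I_ne_zero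
    · linear_combination h
end

section
/- Let θ ∈ (0, π/2], ψ_θ as usual, and let σ be a density operator on an auxiliary finite-dimensional Hilbert space H_{B'} with full rank. If B₇ is a Hermitian operator on ℂ²⊗H_{B'} with B₇² ≤ I (e.g. an observable with ‖B₇‖ ≤ 1) satisfying Tr[B₇ ((1/2) X ⊗ σ)] = 1, then B₇ restricted to the support of I⊗σ equals X ⊗ I. -/
open Matrix Kronecker
open scoped ComplexOrder

open scoped MatrixOrder in
lemma posSemidef_iff_eq_transpose_mul_self {N : Type*} [Fintype N] {M : Matrix N N ℂ} :
    M.PosSemidef ↔ ∃ B : Matrix N N ℂ, M = Bᴴ * B := by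
  classical
  constructor
  · intro h
    obtain ⟨B, hB⟩ := CStarAlgebra.nonneg_iff_eq_star_mul_self.mp h.nonneg
    exact ⟨B, hB⟩
  · rintro ⟨B, rfl⟩
    exact posSemidef_conjTranspose_mul_self B

open scoped MatrixOrder in
lemma psd_sqrt_facts {n : ℕ} {σ : Matrix (Fin n) (Fin n) ℂ} (hσ : σ.PosSemidef) :
    ∃ R : Matrix (Fin n) (Fin n) ℂ, R * R = σ ∧ Rᴴ = R :=
  ⟨CFC.sqrt σ, CFC.sqrt_mul_sqrt_self σ hσ.nonneg, (CFC.sqrt_nonneg σ).posSemidef.1⟩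

lemma psd_of_add_self {N : Type*} [Fintype N] {A : Matrix N N ℂ}
    (hH : A.IsHermitian) (h : (A + A).PosSemidef) : A.PosSemidef := by
  refine .of_dotProduct_mulVec_nonneg hH fun x => ?_
  have h2 := h.dotProduct_mulVec_nonneg x
  rw [add_mulVec, dotProduct_add] at h2
  rw [Complex.le_def] at h2 ⊢
  simp only [Complex.add_re, Complex.add_im, Complex.zero_re, Complex.zero_im] at h2 ⊢
  constructor
  · linarith [h2.1]
  · linarith [h2.2]

lemma psd_trace_nonneg {N : Type*} [Fintype N] {M : Matrix N N ℂ}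
    (hM : M.PosSemidef) : 0 ≤ M.trace := by
  obtain ⟨B, rfl⟩ := posSemidef_iff_eq_transpose_mul_self.mp hM
  refine Finset.sum_nonneg fun i _ => ?_
  simp only [diag_apply, mul_apply, conjTranspose_apply]
  exact Finset.sum_nonneg fun j _ => star_mul_self_nonneg _

lemma psd_trace_zero {N : Type*} [Fintype N] {M : Matrix N N ℂ}
    (hM : M.PosSemidef) (h : M.trace = 0) : M = 0 := by
  obtain ⟨B, rfl⟩ := posSemidef_iff_eq_transpose_mul_self.mp hM
  suffices hB : B = 0 by simp [hB]
  have htr : ∑ i, ∑ j, star (B j i) * B j i = 0 := by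
    simpa [Matrix.trace, Matrix.diag, mul_apply, conjTranspose_apply] using h
  ext i j
  have h1 := (Finset.sum_eq_zero_iff_of_nonneg
    (fun c _ => Finset.sum_nonneg fun r _ => star_mul_self_nonneg (B r c))).mp htr j
    (Finset.mem_univ _)
  have h2 := (Finset.sum_eq_zero_iff_of_nonneg
    (fun r _ => star_mul_self_nonneg (B r j))).mp h1 i (Finset.mem_univ _)
  rw [Complex.star_def, ← Complex.normSq_eq_conj_mul_self] at h2
  simpa using Complex.normSq_eq_zero.mp (by exact_mod_cast h2)

lemma psd_trace_mul_nonneg {N : Type*} [Fintype N] [DecidableEq N] {C D : Matrix N N ℂ}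
    (hC : C.PosSemidef) (hD : D.PosSemidef) : 0 ≤ (C * D).trace := by
  obtain ⟨E, rfl⟩ := posSemidef_iff_eq_transpose_mul_self.mp hD
  rw [← mul_assoc, Matrix.trace_mul_cycle]
  exact psd_trace_nonneg (hC.mul_mul_conjTranspose_same E)

lemma psd_mul_eq_zero_of_trace {N : Type*} [Fintype N] [DecidableEq N] {C D : Matrix N N ℂ}
    (hC : C.PosSemidef) (hD : D.PosSemidef) (h : (C * D).trace = 0) : C * D = 0 := by
  obtain ⟨E, rfl⟩ := posSemidef_iff_eq_transpose_mul_self.mp hD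
  obtain ⟨F, hF⟩ := posSemidef_iff_eq_transpose_mul_self.mp hC
  rw [← mul_assoc, Matrix.trace_mul_cycle] at h
  have h2 : E * C * Eᴴ = 0 := psd_trace_zero (hC.mul_mul_conjTranspose_same E) h
  have h3 : (F * Eᴴ)ᴴ * (F * Eᴴ) = E * C * Eᴴ := by
    rw [hF, conjTranspose_mul, conjTranspose_conjTranspose]
    noncomm_ring
  have h4 : F * Eᴴ = 0 := conjTranspose_mul_self_eq_zero.mp (h3.trans h2)
  have h5 : C * (Eᴴ * E) = Fᴴ * (F * Eᴴ) * E := by rw [hF]; noncomm_ring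
  rw [h5, h4, mul_zero, zero_mul]

lemma kron_conjTranspose {k l m p : Type*} (A : Matrix k l ℂ) (B : Matrix m p ℂ) :
    (A ⊗ₖ B)ᴴ = Aᴴ ⊗ₖ Bᴴ := by
  ext ⟨i, j⟩ ⟨r, s⟩
  simp [conjTranspose_apply, mul_comm]

lemma sub_kron {k m p : Type*} (A B : Matrix k k ℂ) (C : Matrix m p ℂ) :
    (A - B) ⊗ₖ C = A ⊗ₖ C - B ⊗ₖ C := by
  ext ⟨i, j⟩ ⟨r, s⟩
  simp [sub_mul]

noncomputable def Pp : Matrix (Fin 2) (Fin 2) ℂ := !![1/2, 1/2; 1/2, 1/2]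
noncomputable def Pm : Matrix (Fin 2) (Fin 2) ℂ := !![1/2, -(1/2); -(1/2), 1/2]

lemma Pp_add_Pm : Pp + Pm = 1 := by
  ext i j
  fin_cases i <;> fin_cases j <;> simp [Pp, Pm, Matrix.one_apply] <;> norm_num

lemma Pp_sub_Pm : Pp - Pm = PauliX := by
  ext i j
  fin_cases i <;> fin_cases j <;> simp [Pp, Pm, PauliX] <;> norm_num

lemma Pp_proj : Ppᴴ * Pp = Pp := by
  ext i j
  fin_cases i <;> fin_cases j <;>
    simp [Pp, Matrix.mul_apply, Fin.sum_univ_two, Matrix.conjTranspose_apply,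
      Complex.ext_iff] <;> norm_num

lemma Pm_proj : Pmᴴ * Pm = Pm := by
  ext i j
  fin_cases i <;> fin_cases j <;>
    simp [Pm, Matrix.mul_apply, Fin.sum_univ_two, Matrix.conjTranspose_apply,
      Complex.ext_iff] <;> norm_num

/-- If `σ` is a full-rank density matrix and an observable `B₇` with `B₇² ≤ I`
satisfies `Tr[B₇ ((1/2) X ⊗ σ)] = 1`, then `B₇ = X ⊗ I`. -/
theorem B7_is_X (n : ℕ) (σ : Matrix (Fin n) (Fin n) ℂ)
    (hσpd : σ.PosDef) (hσtr : σ.trace = 1)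
    (B₇ : Matrix (Fin 2 × Fin n) (Fin 2 × Fin n) ℂ)
    (hherm : B₇.IsHermitian) (hB2 : ((1 : Matrix (Fin 2 × Fin n) (Fin 2 × Fin n) ℂ) - B₇ * B₇).PosSemidef)
    (htr : (B₇ * ((1 / 2 : ℂ) • (PauliX ⊗ₖ σ))).trace = 1) :
    B₇ = PauliX ⊗ₖ (1 : Matrix (Fin n) (Fin n) ℂ) := by
  classical
  have hσ := hσpd.posSemidef
  obtain ⟨R, hRR, hRH⟩ := psd_sqrt_facts hσ
  have hSp : (Pp ⊗ₖ σ).PosSemidef := by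
    rw [show Pp ⊗ₖ σ = (Pp ⊗ₖ R)ᴴ * (Pp ⊗ₖ R) by
      rw [kron_conjTranspose, ← Matrix.mul_kronecker_mul, Pp_proj, hRH, hRR]]
    exact posSemidef_conjTranspose_mul_self _
  have hSm : (Pm ⊗ₖ σ).PosSemidef := by
    rw [show Pm ⊗ₖ σ = (Pm ⊗ₖ R)ᴴ * (Pm ⊗ₖ R) by
      rw [kron_conjTranspose, ← Matrix.mul_kronecker_mul, Pm_proj, hRH, hRR]]
    exact posSemidef_conjTranspose_mul_self _
  have hermM : ((1 : Matrix (Fin 2 × Fin n) (Fin 2 × Fin n) ℂ) - B₇).IsHermitian :=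
    (Matrix.isHermitian_one).sub hherm
  have hermP : ((1 : Matrix (Fin 2 × Fin n) (Fin 2 × Fin n) ℂ) + B₇).IsHermitian :=
    (Matrix.isHermitian_one).add hherm
  have hpsdM : ((1 : Matrix (Fin 2 × Fin n) (Fin 2 × Fin n) ℂ) - B₇).PosSemidef := by
    apply psd_of_add_self hermM
    have e : (1 - B₇) + (1 - B₇) = (1 - B₇)ᴴ * (1 - B₇) +
        ((1 : Matrix (Fin 2 × Fin n) (Fin 2 × Fin n) ℂ) - B₇ * B₇) := by
      rw [hermM.eq]; noncomm_ring
    rw [e]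
    exact (posSemidef_conjTranspose_mul_self _).add hB2
  have hpsdP : ((1 : Matrix (Fin 2 × Fin n) (Fin 2 × Fin n) ℂ) + B₇).PosSemidef := by
    apply psd_of_add_self hermP
    have e : (1 + B₇) + (1 + B₇) = (1 + B₇)ᴴ * (1 + B₇) +
        ((1 : Matrix (Fin 2 × Fin n) (Fin 2 × Fin n) ℂ) - B₇ * B₇) := by
      rw [hermP.eq]; noncomm_ring
    rw [e]
    exact (posSemidef_conjTranspose_mul_self _).add hB2
  have htr2 : (B₇ * (PauliX ⊗ₖ σ)).trace = 2 := by
    rw [mul_smul_comm, trace_smul, smul_eq_mul] at htr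
    linear_combination 2 * htr
  have hones : ((1 : Matrix (Fin 2) (Fin 2) ℂ) ⊗ₖ σ).trace = 2 := by
    rw [Matrix.trace_kronecker, hσtr, Matrix.trace_one]
    norm_num
  have hsplit : Pp ⊗ₖ σ + Pm ⊗ₖ σ = (1 : Matrix (Fin 2) (Fin 2) ℂ) ⊗ₖ σ := by
    rw [← Matrix.add_kronecker, Pp_add_Pm]
  have hsplit2 : Pp ⊗ₖ σ - Pm ⊗ₖ σ = PauliX ⊗ₖ σ := by
    rw [← sub_kron, Pp_sub_Pm]
  have hsum0 : ((1 - B₇) * (Pp ⊗ₖ σ)).trace + ((1 + B₇) * (Pm ⊗ₖ σ)).trace = 0 := by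
    have e1 : (Pp ⊗ₖ σ).trace + (Pm ⊗ₖ σ).trace = 2 := by
      rw [← trace_add, hsplit, hones]
    have e2 : (B₇ * (Pp ⊗ₖ σ)).trace - (B₇ * (Pm ⊗ₖ σ)).trace = 2 := by
      rw [← trace_sub, ← mul_sub, hsplit2, htr2]
    simp only [sub_mul, add_mul, one_mul, trace_sub, trace_add]
    linear_combination e1 - e2
  have a1 := psd_trace_mul_nonneg hpsdM hSp
  have a2 := psd_trace_mul_nonneg hpsdP hSm
  have h1 : ((1 - B₇) * (Pp ⊗ₖ σ)).trace = 0 := by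
    refine le_antisymm ?_ a1
    rw [show ((1 - B₇) * (Pp ⊗ₖ σ)).trace = -((1 + B₇) * (Pm ⊗ₖ σ)).trace by
      linear_combination hsum0]
    exact neg_nonpos.mpr a2
  have h2 : ((1 + B₇) * (Pm ⊗ₖ σ)).trace = 0 := by
    refine le_antisymm ?_ a2
    rw [show ((1 + B₇) * (Pm ⊗ₖ σ)).trace = -((1 - B₇) * (Pp ⊗ₖ σ)).trace by
      linear_combination hsum0]
    exact neg_nonpos.mpr a1
  have hz1 : (1 - B₇) * (Pp ⊗ₖ σ) = 0 := psd_mul_eq_zero_of_trace hpsdM hSp h1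
  have hz2 : (1 + B₇) * (Pm ⊗ₖ σ) = 0 := psd_mul_eq_zero_of_trace hpsdP hSm h2
  have hb1 : B₇ * (Pp ⊗ₖ σ) = Pp ⊗ₖ σ := by
    rw [sub_mul, one_mul, sub_eq_zero] at hz1
    exact hz1.symm
  have hb2 : B₇ * (Pm ⊗ₖ σ) = -(Pm ⊗ₖ σ) := by
    rw [add_mul, one_mul] at hz2
    exact eq_neg_of_add_eq_zero_right hz2
  have hkey : B₇ * ((1 : Matrix (Fin 2) (Fin 2) ℂ) ⊗ₖ σ) = PauliX ⊗ₖ σ := by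
    rw [← hsplit, mul_add, hb1, hb2, ← sub_eq_add_neg, hsplit2]
  have hdet : IsUnit σ.det := (Matrix.isUnit_iff_isUnit_det σ).mp hσpd.isUnit
  have hinv : σ * σ⁻¹ = 1 := Matrix.mul_nonsing_inv σ hdet
  calc B₇ = B₇ * (((1 : Matrix (Fin 2) (Fin 2) ℂ) ⊗ₖ σ) *
        ((1 : Matrix (Fin 2) (Fin 2) ℂ) ⊗ₖ σ⁻¹)) := by
        rw [← Matrix.mul_kronecker_mul, one_mul, hinv, Matrix.one_kronecker_one, mul_one]
    _ = (PauliX ⊗ₖ σ) * ((1 : Matrix (Fin 2) (Fin 2) ℂ) ⊗ₖ σ⁻¹) := by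
        rw [← mul_assoc, hkey]
    _ = PauliX ⊗ₖ (1 : Matrix (Fin n) (Fin n) ℂ) := by
        rw [← Matrix.mul_kronecker_mul, mul_one, hinv]
end

section
/- Let {α_a}_{a=1}^{n} with n ≤ 3 be an extremal qubit POVM with linearly independent rank-one elements α_a = |α_a⟩⟨α_a|. Then the operators |α_a⟩⟨α*_a| (a = 1,…,n) are linearly independent over ℂ. -/
open Matrix

/-- For an extremal qubit POVM with at most three linearly independent rank-one
elements `α_a = |α_a⟩⟨α_a|`, the operators `|α_a⟩⟨α*_a|` are linearly independent. -/
theorem conj_outer_linearIndependent (n : ℕ) (hn : n ≤ 3)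
    (α : Fin n → Fin 2 → ℂ)
    (hind : LinearIndependent ℂ (fun a => vecMulVec (α a) (star (α a))))
    (hsum : ∑ a, vecMulVec (α a) (star (α a)) = 1) :
    LinearIndependent ℂ (fun a => vecMulVec (α a) (α a)) := by
  clear hsum
  have hne : ∀ a, α a ≠ 0 := by
    intro a ha
    apply hind.ne_zero a
    ext i j
    simp [vecMulVec_apply, ha]
  have hne2 : ∀ a, ¬(α a 0 = 0 ∧ α a 1 = 0) := by
    rintro a ⟨h0, h1⟩
    exact hne a (funext fun i => by fin_cases i <;> simpa)
  have hcross : ∀ a b, a ≠ b → α a 0 * α b 1 - α b 0 * α a 1 ≠ 0 := by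
    intro a b hab hD
    obtain ⟨c, hc⟩ : ∃ c : ℂ, α b = c • α a := by
      by_cases h0 : α a 0 = 0
      · have h1 : α a 1 ≠ 0 := fun h => hne2 a ⟨h0, h⟩
        have hb0 : α b 0 = 0 := by
          have h : α b 0 * α a 1 = 0 := by linear_combination -hD + α b 1 * h0
          exact (mul_eq_zero.mp h).resolve_right h1
        refine ⟨α b 1 / α a 1, funext fun i => ?_⟩
        fin_cases i
        · simp [hb0, h0]
        · simp only [Pi.smul_apply, smul_eq_mul, Fin.zero_eta, Fin.mk_one]
          field_simp
      · refine ⟨α b 0 / α a 0, funext fun i => ?_⟩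
        fin_cases i
        · simp only [Pi.smul_apply, smul_eq_mul, Fin.zero_eta, Fin.mk_one]
          field_simp
        · simp only [Pi.smul_apply, smul_eq_mul, Fin.zero_eta, Fin.mk_one]
          field_simp
          linear_combination hD
    have hsmul : vecMulVec (α b) (star (α b)) = (c * star c) • vecMulVec (α a) (star (α a)) := by
      ext i j
      simp [vecMulVec_apply, hc, Pi.smul_apply, star_mul']
      ring
    have := linearIndependent_iff'.mp hind {a, b}
      (fun x => if x = b then 1 else -(c * star c)) ?_ b (by simp)
    · simp at this
    · rw [Finset.sum_pair hab, hsmul]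
      simp [hab]
  rw [Fintype.linearIndependent_iff]
  intro g hg
  have key : ∀ i j : Fin 2, ∑ x, g x * (α x i * α x j) = 0 := by
    intro i j
    have h := congrFun (congrFun hg i) j
    simpa [Matrix.sum_apply, vecMulVec_apply, mul_assoc] using h
  interval_cases n
  · exact fun a => a.elim0
  · -- n = 1
    have e00 := key 0 0; have e11 := key 1 1
    simp only [Fin.sum_univ_one] at e00 e11
    have h0 : g 0 * α 0 0 = 0 :=
      mul_self_eq_zero.mp (by linear_combination g 0 * e00)
    have h1 : g 0 * α 0 1 = 0 :=
      mul_self_eq_zero.mp (by linear_combination g 0 * e11)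
    intro a; fin_cases a
    by_contra hg0
    exact hne2 0 ⟨(mul_eq_zero.mp h0).resolve_left hg0,
      (mul_eq_zero.mp h1).resolve_left hg0⟩
  · -- n = 2
    have e00 := key 0 0; have e01 := key 0 1; have e11 := key 1 1
    simp only [Fin.sum_univ_two] at e00 e01 e11
    have D := hcross 0 1 (by decide)
    have h00 : g 0 * α 0 0 * (α 0 0 * α 1 1 - α 1 0 * α 0 1) = 0 := by
      linear_combination α 1 1 * e00 - α 1 0 * e01
    have h01 : g 0 * α 0 1 * (α 0 0 * α 1 1 - α 1 0 * α 0 1) = 0 := by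
      linear_combination α 1 1 * e01 - α 1 0 * e11
    have h10 : g 1 * α 1 0 * (α 0 0 * α 1 1 - α 1 0 * α 0 1) = 0 := by
      linear_combination -(α 0 1 * e00) + α 0 0 * e01
    have h11 : g 1 * α 1 1 * (α 0 0 * α 1 1 - α 1 0 * α 0 1) = 0 := by
      linear_combination -(α 0 1 * e01) + α 0 0 * e11
    intro a; fin_cases a
    · show g 0 = 0
      by_contra hg0
      exact hne2 0 ⟨(mul_eq_zero.mp ((mul_eq_zero.mp h00).resolve_right D)).resolve_left hg0,
        (mul_eq_zero.mp ((mul_eq_zero.mp h01).resolve_right D)).resolve_left hg0⟩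
    · show g 1 = 0
      by_contra hg1
      exact hne2 1 ⟨(mul_eq_zero.mp ((mul_eq_zero.mp h10).resolve_right D)).resolve_left hg1,
        (mul_eq_zero.mp ((mul_eq_zero.mp h11).resolve_right D)).resolve_left hg1⟩
  · -- n = 3
    have e00 := key 0 0; have e01 := key 0 1; have e11 := key 1 1
    simp only [Fin.sum_univ_three] at e00 e01 e11
    have D01 := hcross 0 1 (by decide)
    have D02 := hcross 0 2 (by decide)
    have D12 := hcross 1 2 (by decide)
    have h0 : g 0 * ((α 0 0 * α 1 1 - α 1 0 * α 0 1) * (α 0 0 * α 2 1 - α 2 0 * α 0 1)) = 0 := by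
      linear_combination (α 1 1 * α 2 1) * e00 - (α 1 0 * α 2 1 + α 1 1 * α 2 0) * e01
        + (α 1 0 * α 2 0) * e11
    have h1 : g 1 * ((α 0 0 * α 1 1 - α 1 0 * α 0 1) * (α 1 0 * α 2 1 - α 2 0 * α 1 1)) = 0 := by
      linear_combination -((α 0 1 * α 2 1) * e00) + (α 0 0 * α 2 1 + α 0 1 * α 2 0) * e01
        - (α 0 0 * α 2 0) * e11
    have h2 : g 2 * ((α 0 0 * α 2 1 - α 2 0 * α 0 1) * (α 1 0 * α 2 1 - α 2 0 * α 1 1)) = 0 := by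
      linear_combination (α 0 1 * α 1 1) * e00 - (α 0 0 * α 1 1 + α 0 1 * α 1 0) * e01
        + (α 0 0 * α 1 0) * e11
    intro a; fin_cases a
    · exact (mul_eq_zero.mp h0).resolve_right (mul_ne_zero D01 D02)
    · exact (mul_eq_zero.mp h1).resolve_right (mul_ne_zero D01 D12)
    · exact (mul_eq_zero.mp h2).resolve_right (mul_ne_zero D02 D12)
end

section
/- Let H' be a finite-dimensional Hilbert space, A'_± orthogonal projectors on H' with A'_+ + A'_− = I, |α⟩ a unit vector in ℂ², and K' an operator on H' with A'_+ K' A'_− = K'. Define R = |α⟩⟨α| ⊗ A'_+ + |α*⟩⟨α*| ⊗ A'_− + |α⟩⟨α*| ⊗ K' + |α*⟩⟨α| ⊗ K'†. Then R is positive semidefinite if and only if K' K'† ≤ A'_+ and K'† K' ≤ A'_−. -/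
open Matrix Kronecker
open scoped ComplexOrder

private lemma kron_conjT {l m n p : Type*} (A : Matrix l m ℂ) (B : Matrix n p ℂ) :
    (A ⊗ₖ B)ᴴ = Aᴴ ⊗ₖ Bᴴ := by
  ext ⟨i, j⟩ ⟨k, l⟩
  simp [conjTranspose_apply, star_mul']

private lemma kron_sub {l m n p : Type*} (A : Matrix l m ℂ) (B C : Matrix n p ℂ) :
    A ⊗ₖ (B - C) = A ⊗ₖ B - A ⊗ₖ C := by
  ext ⟨i, j⟩ ⟨k, l⟩
  simp [mul_sub]

private lemma one_kron_posSemidef {n : Type*} [Fintype n] [DecidableEq n]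
    {M : Matrix n n ℂ} (h : ((1 : Matrix Unit Unit ℂ) ⊗ₖ M).PosSemidef) :
    M.PosSemidef := by
  have h2 := h.submatrix (fun j : n => (((), j) : Unit × n))
  have he : ((1 : Matrix Unit Unit ℂ) ⊗ₖ M).submatrix
      (fun j : n => (((), j) : Unit × n)) (fun j : n => (((), j) : Unit × n)) = M := by
    ext i j
    simp [Matrix.one_apply]
  rwa [he] at h2

/-- Positivity characterisation of the general POVM element form from
lemma 2 of the paper:
`R = |α⟩⟨α| ⊗ A'₊ + |α*⟩⟨α*| ⊗ A'₋ + |α⟩⟨α*| ⊗ K' + |α*⟩⟨α| ⊗ K'†`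
is positive semidefinite iff `K'K'† ≤ A'₊` and `K'†K' ≤ A'₋`. -/
theorem R_posSemidef_iff (m : ℕ)
    (Ap Am : Matrix (Fin m) (Fin m) ℂ)
    (hApH : Ap.IsHermitian) (hApProj : Ap * Ap = Ap)
    (hAmH : Am.IsHermitian) (hAmProj : Am * Am = Am)
    (hsum : Ap + Am = 1)
    (α : Fin 2 → ℂ) (hα : ∑ i, Complex.normSq (α i) = 1)
    (K : Matrix (Fin m) (Fin m) ℂ) (hK : Ap * K * Am = K) :
    (vecMulVec α (star α) ⊗ₖ Ap
        + vecMulVec (star α) (star (star α)) ⊗ₖ Am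
        + vecMulVec α (star (star α)) ⊗ₖ K
        + vecMulVec (star α) (star α) ⊗ₖ Kᴴ).PosSemidef
      ↔ (Ap - K * Kᴴ).PosSemidef ∧ (Am - Kᴴ * K).PosSemidef := by
  -- algebraic consequences of the hypotheses
  have hAmEq : Am = 1 - Ap := by
    rw [← hsum]; abel
  have hApAm : Ap * Am = 0 := by
    rw [hAmEq, mul_sub, mul_one, hApProj, sub_self]
  have hAmAp : Am * Ap = 0 := by
    rw [hAmEq, sub_mul, one_mul, hApProj, sub_self]
  have hKAm : K * Am = K := by
    conv_lhs => rw [← hK, mul_assoc (Ap * K), hAmProj]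
    exact hK
  have hApK : Ap * K = K := by
    conv_lhs => rw [← hK, ← mul_assoc, ← mul_assoc, hApProj]
    exact hK
  have hKAp : K * Ap = 0 := by
    rw [← hKAm, mul_assoc, hAmAp, mul_zero]
  have hAmK : Am * K = 0 := by
    rw [← hApK, ← mul_assoc, hAmAp, zero_mul]
  have hAmKH : Am * Kᴴ = Kᴴ := by
    have := congrArg conjTranspose hKAm
    simpa [conjTranspose_mul, hAmH.eq] using this
  have hKHAp : Kᴴ * Ap = Kᴴ := by
    have := congrArg conjTranspose hApK
    simpa [conjTranspose_mul, hApH.eq] using this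
  have hApKH : Ap * Kᴴ = 0 := by
    have := congrArg conjTranspose hKAp
    simpa [conjTranspose_mul, hApH.eq] using this
  have hKHAm : Kᴴ * Am = 0 := by
    have := congrArg conjTranspose hAmK
    simpa [conjTranspose_mul, hAmH.eq] using this
  have hKK : K * K = 0 := by
    nth_rewrite 2 [← hK]
    rw [← mul_assoc, ← mul_assoc, hKAp, zero_mul, zero_mul]
  have hKHKH : Kᴴ * Kᴴ = 0 := by
    have := congrArg conjTranspose hKK
    simpa [conjTranspose_mul] using this
  have hApKKH : Ap * (K * Kᴴ) = K * Kᴴ := by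
    rw [← mul_assoc, hApK]
  have hKKKH : K * (K * Kᴴ) = 0 := by
    rw [← mul_assoc, hKK, zero_mul]
  have hAmKHK : Am * (Kᴴ * K) = Kᴴ * K := by
    rw [← mul_assoc, hAmKH]
  have hKHKHK : Kᴴ * (Kᴴ * K) = 0 := by
    rw [← mul_assoc, hKHKH, zero_mul]
  -- scalar facts
  have e1 : replicateRow Unit (star α) * replicateCol Unit α = 1 := by
    have : star α ⬝ᵥ α = 1 := by
      have : star α ⬝ᵥ α = ((∑ i, Complex.normSq (α i) : ℝ) : ℂ) := by
        simp [dotProduct, Complex.normSq_eq_conj_mul_self]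
      rw [this, hα]; norm_num
    rw [replicateRow_mul_replicateCol, this]
    ext i j
    simp [Matrix.one_apply]
  have e2 : replicateRow Unit α * replicateCol Unit (star α) = 1 := by
    have : α ⬝ᵥ star α = 1 := by
      have : α ⬝ᵥ star α = ((∑ i, Complex.normSq (α i) : ℝ) : ℂ) := by
        simp [dotProduct, Complex.mul_conj]
      rw [this, hα]; norm_num
    rw [replicateRow_mul_replicateCol, this]
    ext i j
    simp [Matrix.one_apply]
  simp only [star_star]
  set R := vecMulVec α (star α) ⊗ₖ Ap + vecMulVec (star α) α ⊗ₖ Am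
      + vecMulVec α α ⊗ₖ K + vecMulVec (star α) (star α) ⊗ₖ Kᴴ with hRdef
  constructor
  · intro h
    constructor
    · have hps := h.conjTranspose_mul_mul_same (replicateCol Unit α ⊗ₖ Ap - replicateCol Unit (star α) ⊗ₖ Kᴴ)
      have hEq : (replicateCol Unit α ⊗ₖ Ap - replicateCol Unit (star α) ⊗ₖ Kᴴ)ᴴ * R
          * (replicateCol Unit α ⊗ₖ Ap - replicateCol Unit (star α) ⊗ₖ Kᴴ)
          = (1 : Matrix Unit Unit ℂ) ⊗ₖ (Ap - K * Kᴴ) := by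
        rw [hRdef]
        simp only [kron_sub, conjTranspose_sub, kron_conjT, conjTranspose_replicateCol, star_star,
          hApH.eq, conjTranspose_conjTranspose, vecMulVec_eq Unit, Matrix.sub_mul,
          Matrix.mul_sub, Matrix.add_mul, Matrix.mul_add, Matrix.mul_assoc, Matrix.neg_mul, Matrix.mul_neg, neg_neg,
          ← mul_kronecker_mul, e1, e2,
          hApProj, hAmProj, hApK, hKAm, hKAp, hAmK, hApKH, hAmKH, hKHAp, hKHAm,
          hKK, hKHKH, hApAm, hAmAp, hApKKH, hKKKH, hAmKHK, hKHKHK,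
          Matrix.mul_one, Matrix.one_mul, Matrix.mul_zero, Matrix.zero_mul, kronecker_zero,
          zero_kronecker, sub_zero, zero_sub, add_zero, zero_add]
        abel
      rw [hEq] at hps
      exact one_kron_posSemidef hps
    · have hps := h.conjTranspose_mul_mul_same (replicateCol Unit (star α) ⊗ₖ Am - replicateCol Unit α ⊗ₖ K)
      have hEq : (replicateCol Unit (star α) ⊗ₖ Am - replicateCol Unit α ⊗ₖ K)ᴴ * R
          * (replicateCol Unit (star α) ⊗ₖ Am - replicateCol Unit α ⊗ₖ K)
          = (1 : Matrix Unit Unit ℂ) ⊗ₖ (Am - Kᴴ * K) := by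
        rw [hRdef]
        simp only [kron_sub, conjTranspose_sub, kron_conjT, conjTranspose_replicateCol, star_star,
          hAmH.eq, conjTranspose_conjTranspose, vecMulVec_eq Unit, Matrix.sub_mul,
          Matrix.mul_sub, Matrix.add_mul, Matrix.mul_add, Matrix.mul_assoc, Matrix.neg_mul, Matrix.mul_neg, neg_neg,
          ← mul_kronecker_mul, e1, e2,
          hApProj, hAmProj, hApK, hKAm, hKAp, hAmK, hApKH, hAmKH, hKHAp, hKHAm,
          hKK, hKHKH, hApAm, hAmAp, hApKKH, hKKKH, hAmKHK, hKHKHK,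
          Matrix.mul_one, Matrix.one_mul, Matrix.mul_zero, Matrix.zero_mul, kronecker_zero,
          zero_kronecker, sub_zero, zero_sub, add_zero, zero_add]
        abel
      rw [hEq] at hps
      exact one_kron_posSemidef hps
  · rintro ⟨h1, _h2⟩
    obtain ⟨B, hB⟩ : ∃ B : Matrix (Fin m) (Fin m) ℂ, Ap - K * Kᴴ = Bᴴ * B := by
      open scoped MatrixOrder in
      obtain ⟨B, hB'⟩ := CStarAlgebra.nonneg_iff_eq_star_mul_self.mp h1.nonneg
      exact ⟨B, hB'⟩
    have hEq : R = (replicateRow Unit (star α) ⊗ₖ B)ᴴ * (replicateRow Unit (star α) ⊗ₖ B)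
        + (replicateRow Unit (star α) ⊗ₖ Kᴴ + replicateRow Unit α ⊗ₖ Am)ᴴ
          * (replicateRow Unit (star α) ⊗ₖ Kᴴ + replicateRow Unit α ⊗ₖ Am) := by
      rw [hRdef]
      simp only [conjTranspose_add, kron_conjT, conjTranspose_replicateRow, star_star, hAmH.eq,
        conjTranspose_conjTranspose, Matrix.add_mul, Matrix.mul_add, ← mul_kronecker_mul,
        hKAm, hAmKH, hAmProj, vecMulVec_eq Unit]
      rw [← hB, kron_sub]
      abel
    rw [hEq]
    exact (posSemidef_conjTranspose_mul_self _).add (posSemidef_conjTranspose_mul_self _)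
end
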